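/- arXiv:1902.03660 — 4 statements merged into one kernel-verified Lean document; each statement's English description precedes it below -/
import Mathlib

section
/- Let f : (Fin n → Bool) → Bool be a total Boolean function, let x : Fin n → Bool be an input, and let B be a minimal sensitive block of x with respect to f. Then the cardinality of B is at most the sensitivity s(f) of f. -/
/-- `flipBlock x B` is the input obtained from `x` by flipping every bit whose index lies in `B`. -/
def flipBlock {n : ℕ} (x : Fin n → Bool) (B : Finset (Fin n)) : Fin n → Bool :=
  fun i => if i ∈ B then !(x i) else x i

/-- `B` is a sensitive block of `x` with respect to `f` if flipping the bits in `B` changes the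
value of `f`. -/
def SensitiveBlock {n : ℕ} (f : (Fin n → Bool) → Bool) (x : Fin n → Bool)
    (B : Finset (Fin n)) : Prop :=
  f (flipBlock x B) ≠ f x

/-- `B` is a minimal sensitive block of `x` if it is a sensitive block and no proper subset of it
is a sensitive block. -/
def MinimalSensitiveBlock {n : ℕ} (f : (Fin n → Bool) → Bool) (x : Fin n → Bool)
    (B : Finset (Fin n)) : Prop :=
  SensitiveBlock f x B ∧ ∀ C : Finset (Fin n), C ⊂ B → ¬ SensitiveBlock f x C

/-- The sensitivity of `f`: the maximum over inputs `y` of the number of indices `i` such that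
flipping bit `i` of `y` changes the value of `f`. -/
def sensitivity {n : ℕ} (f : (Fin n → Bool) → Bool) : ℕ :=
  Finset.univ.sup fun y : Fin n → Bool =>
    (Finset.univ.filter fun i : Fin n => f (flipBlock y {i}) ≠ f y).card

lemma flipBlock_flipBlock_singleton_of_mem {n : ℕ} (x : Fin n → Bool) {B : Finset (Fin n)}
    {i : Fin n} (hi : i ∈ B) :
    flipBlock (flipBlock x B) {i} = flipBlock x (B.erase i) := by
  funext j
  by_cases hj : j = i
  · subst hj
    simp [flipBlock, hi]
  · simp [flipBlock, hj]

lemma card_filter_sensitive_le_sensitivity {n : ℕ} (f : (Fin n → Bool) → Bool)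
    (y : Fin n → Bool) :
    (Finset.univ.filter fun i : Fin n => f (flipBlock y {i}) ≠ f y).card ≤ sensitivity f :=
  Finset.le_sup (f := fun y => (Finset.univ.filter fun i => f (flipBlock y {i}) ≠ f y).card)
    (Finset.mem_univ y)

/-- Flipping `i` back turns `x^B` into `x^(B \ {i})`, where `f` takes the value `f x` by
minimality of `B`. -/
lemma MinimalSensitiveBlock.flipBlock_singleton_sensitive {n : ℕ} {f : (Fin n → Bool) → Bool}
    {x : Fin n → Bool} {B : Finset (Fin n)} (hB : MinimalSensitiveBlock f x B) {i : Fin n}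
    (hi : i ∈ B) :
    f (flipBlock (flipBlock x B) {i}) ≠ f (flipBlock x B) := by
  obtain ⟨hsens, hmin⟩ := hB
  have h_erase : f (flipBlock x (B.erase i)) = f x :=
    not_not.mp (hmin _ (Finset.erase_ssubset hi))
  rw [flipBlock_flipBlock_singleton_of_mem x hi, h_erase]
  exact hsens.symm

theorem minimal_sensitive_block_card_le_sensitivity {n : ℕ}
    (f : (Fin n → Bool) → Bool) (x : Fin n → Bool) (B : Finset (Fin n))
    (hB : MinimalSensitiveBlock f x B) :
    B.card ≤ sensitivity f := by
  set y := flipBlock x B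
  calc B.card ≤ (Finset.univ.filter fun i : Fin n => f (flipBlock y {i}) ≠ f y).card :=
        Finset.card_le_card fun i hi =>
          Finset.mem_filter.mpr ⟨Finset.mem_univ i, hB.flipBlock_singleton_sensitive hi⟩
    _ ≤ sensitivity f := card_filter_sensitive_le_sensitivity f y
end

section
/- Let f : (Fin n → Bool) → Bool be a total Boolean function and let x : Fin n → Bool be an input. If a set S ⊆ Fin n intersects every minimal sensitive block of x with respect to f, then S is a certificate for x: for every input y : Fin n → Bool that agrees with x on all indices in S, one has f(y) = f(x). -/
theorem certificate_of_hits_all_minimal_sensitive_blocks {n : ℕ}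
    (f : (Fin n → Bool) → Bool) (x : Fin n → Bool) (S : Finset (Fin n))
    (hS : ∀ B : Finset (Fin n), MinimalSensitiveBlock f x B → (S ∩ B).Nonempty) :
    ∀ y : Fin n → Bool, (∀ i ∈ S, y i = x i) → f y = f x := by
  -- every sensitive block contains a minimal one
  have key : ∀ B : Finset (Fin n), SensitiveBlock f x B →
      ∃ M ⊆ B, MinimalSensitiveBlock f x M := by
    intro B
    induction B using Finset.strongInduction with
    | _ B ih =>
      intro hB
      by_cases h : ∀ C : Finset (Fin n), C ⊂ B → ¬ SensitiveBlock f x C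
      · exact ⟨B, le_refl _, hB, h⟩
      · push_neg at h
        obtain ⟨C, hCB, hC⟩ := h
        obtain ⟨M, hMC, hM⟩ := ih C hCB hC
        exact ⟨M, hMC.trans hCB.subset, hM⟩
  intro y hy
  by_contra hne
  set B : Finset (Fin n) := Finset.univ.filter (fun i => y i ≠ x i) with hBdef
  have hyB : y = flipBlock x B := by
    funext i
    simp only [flipBlock, hBdef, Finset.mem_filter, Finset.mem_univ, true_and]
    by_cases h : y i = x i
    · simp [h]
    · simp [h]
      cases hxi : x i <;> cases hyi : y i <;> simp_all
  have hsens : SensitiveBlock f x B := by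
    rw [SensitiveBlock, ← hyB]; exact hne
  obtain ⟨M, hMB, hM⟩ := key B hsens
  obtain ⟨i, hi⟩ := hS M hM
  simp only [Finset.mem_inter] at hi
  have := hMB hi.2
  simp only [hBdef, Finset.mem_filter] at this
  exact this.2 (hy i hi.1)
end

section
/- Let O, O' be m×m unitary matrices over ℂ, let P be an m×m orthogonal projection matrix (Pᴴ = P and P·P = P) with O·(1 − P) = O'·(1 − P), and let U_1, …, U_T be m×m unitary matrices. Define vectors by ψ_0 = φ_0 = v for some vector v : Fin m → ℂ, and ψ_{t+1} = U_{t+1}·O·ψ_t, φ_{t+1} = U_{t+1}·O'·φ_t for 0 ≤ t < T. Then ‖ψ_T − φ_T‖ ≤ 2·∑_{t=0}^{T−1} ‖P·ψ_t‖, where ‖·‖ is the Euclidean norm. -/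
/-!
Off the range of `P` the unitaries `O` and `O'` agree, so `(O - O') x = (O - O') (P x)` has norm
at most `2 ‖P x‖`. As `U (t + 1)` and `O'` are unitary, one step of the two evolutions gives
`‖ψ (t + 1) - φ (t + 1)‖ = ‖O ψ t - O' φ t‖ ≤ ‖(O - O') ψ t‖ + ‖O' (ψ t - φ t)‖
  ≤ 2 ‖P ψ t‖ + ‖ψ t - φ t‖`,
and these errors add up from `ψ 0 - φ 0 = 0`.
-/

/-- The Euclidean norm of a complex vector. -/
noncomputable def euclNorm {m : ℕ} (v : Fin m → ℂ) : ℝ :=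
  Real.sqrt (∑ i, ‖v i‖ ^ 2)

open Matrix WithLp

lemma euclNorm_eq_norm_toLp {m : ℕ} (v : Fin m → ℂ) : euclNorm v = ‖toLp 2 v‖ := by
  simp [euclNorm, EuclideanSpace.norm_eq]

lemma euclNorm_add_le {m : ℕ} (v w : Fin m → ℂ) : euclNorm (v + w) ≤ euclNorm v + euclNorm w := by
  simpa only [euclNorm_eq_norm_toLp, toLp_add] using norm_add_le _ _

lemma euclNorm_sub_le {m : ℕ} (v w : Fin m → ℂ) : euclNorm (v - w) ≤ euclNorm v + euclNorm w := by
  simpa only [euclNorm_eq_norm_toLp, toLp_sub] using norm_sub_le _ _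

lemma euclNorm_mulVec_of_mem_unitaryGroup {m : ℕ} {A : Matrix (Fin m) (Fin m) ℂ}
    (hA : A ∈ unitaryGroup (Fin m) ℂ) (x : Fin m → ℂ) : euclNorm (A *ᵥ x) = euclNorm x := by
  simpa [euclNorm_eq_norm_toLp] using
    (toEuclideanCLM (n := Fin m) (𝕜 := ℂ) A).norm_map_of_mem_unitary
      (Unitary.map_mem toEuclideanCLM hA) (toLp 2 x)

lemma euclNorm_mulVec_sub_mulVec_le {m : ℕ} {O O' P : Matrix (Fin m) (Fin m) ℂ}
    (hO : O ∈ unitaryGroup (Fin m) ℂ) (hO' : O' ∈ unitaryGroup (Fin m) ℂ)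
    (hOP : O * (1 - P) = O' * (1 - P)) (x y : Fin m → ℂ) :
    euclNorm (O *ᵥ x - O' *ᵥ y) ≤ 2 * euclNorm (P *ᵥ x) + euclNorm (x - y) := by
  have hagree : O *ᵥ x - O *ᵥ (P *ᵥ x) = O' *ᵥ x - O' *ᵥ (P *ᵥ x) := by
    simpa only [mulVec_mulVec, mul_sub, mul_one, sub_mulVec] using
      congrArg (· *ᵥ x) hOP
  have hsplit : O *ᵥ x - O' *ᵥ y = (O *ᵥ (P *ᵥ x) - O' *ᵥ (P *ᵥ x)) + O' *ᵥ (x - y) := by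
    rw [mulVec_sub]
    linear_combination hagree
  calc euclNorm (O *ᵥ x - O' *ᵥ y)
      ≤ (euclNorm (O *ᵥ (P *ᵥ x)) + euclNorm (O' *ᵥ (P *ᵥ x))) + euclNorm (O' *ᵥ (x - y)) := by
        rw [hsplit]
        exact (euclNorm_add_le _ _).trans (add_le_add_left (euclNorm_sub_le _ _) _)
    _ = 2 * euclNorm (P *ᵥ x) + euclNorm (x - y) := by
        simp only [euclNorm_mulVec_of_mem_unitaryGroup hO, euclNorm_mulVec_of_mem_unitaryGroup hO']
        ring

lemma le_add_sum_range_of_succ_le {d a : ℕ → ℝ} {T : ℕ}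
    (h : ∀ t < T, d (t + 1) ≤ d t + a t) : d T ≤ d 0 + ∑ t ∈ Finset.range T, a t := by
  have hsum : d T - d 0 ≤ ∑ t ∈ Finset.range T, a t := by
    rw [← Finset.sum_range_sub]
    exact Finset.sum_le_sum fun t ht => by linarith [h t (Finset.mem_range.mp ht)]
  linarith

theorem hybrid_telescope_general {m T : ℕ} (O O' P : Matrix (Fin m) (Fin m) ℂ)
    (hO : O ∈ Matrix.unitaryGroup (Fin m) ℂ)
    (hO' : O' ∈ Matrix.unitaryGroup (Fin m) ℂ)
    (hOP : O * (1 - P) = O' * (1 - P))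
    (U : ℕ → Matrix (Fin m) (Fin m) ℂ)
    (hU : ∀ t, 1 ≤ t → t ≤ T → U t ∈ Matrix.unitaryGroup (Fin m) ℂ)
    (v : Fin m → ℂ) (ψ φ : ℕ → Fin m → ℂ)
    (hψ0 : ψ 0 = v) (hφ0 : φ 0 = v)
    (hψ : ∀ t, t < T → ψ (t + 1) = (U (t + 1)).mulVec (O.mulVec (ψ t)))
    (hφ : ∀ t, t < T → φ (t + 1) = (U (t + 1)).mulVec (O'.mulVec (φ t))) :
    euclNorm (ψ T - φ T) ≤ 2 * ∑ t ∈ Finset.range T, euclNorm (P.mulVec (ψ t)) := by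
  have hstep : ∀ t < T, euclNorm (ψ (t + 1) - φ (t + 1))
      ≤ euclNorm (ψ t - φ t) + 2 * euclNorm (P *ᵥ ψ t) := by
    intro t ht
    rw [hψ t ht, hφ t ht, ← mulVec_sub,
      euclNorm_mulVec_of_mem_unitaryGroup (hU (t + 1) le_add_self ht)]
    linarith [euclNorm_mulVec_sub_mulVec_le hO hO' hOP (ψ t) (φ t)]
  simpa [hψ0, hφ0, euclNorm, Finset.mul_sum] using
    le_add_sum_range_of_succ_le (d := fun t => euclNorm (ψ t - φ t)) hstep

theorem hybrid_telescope {m T : ℕ} (O O' P : Matrix (Fin m) (Fin m) ℂ)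
    (hO : O ∈ Matrix.unitaryGroup (Fin m) ℂ)
    (hO' : O' ∈ Matrix.unitaryGroup (Fin m) ℂ)
    (hP1 : P.conjTranspose = P) (hP2 : P * P = P)
    (hOP : O * (1 - P) = O' * (1 - P))
    (U : ℕ → Matrix (Fin m) (Fin m) ℂ)
    (hU : ∀ t, 1 ≤ t → t ≤ T → U t ∈ Matrix.unitaryGroup (Fin m) ℂ)
    (v : Fin m → ℂ) (ψ φ : ℕ → Fin m → ℂ)
    (hψ0 : ψ 0 = v) (hφ0 : φ 0 = v)
    (hψ : ∀ t, t < T → ψ (t + 1) = (U (t + 1)).mulVec (O.mulVec (ψ t)))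
    (hφ : ∀ t, t < T → φ (t + 1) = (U (t + 1)).mulVec (O'.mulVec (φ t))) :
    euclNorm (ψ T - φ T) ≤ 2 * ∑ t ∈ Finset.range T, euclNorm (P.mulVec (ψ t)) :=
  hybrid_telescope_general O O' P hO hO' hOP U hU v ψ φ hψ0 hφ0 hψ hφ
end

section
/- (Hybrid argument.) Fix n, w, T ≥ 1, an input x : Fin n → Bool, and a block B ⊆ Fin n. Work in the space of vectors indexed by (Fin n × Bool) × Fin w. For an input z : Fin n → Bool, let O_z be the permutation matrix sending the basis vector indexed by ((i, b), c) to the basis vector indexed by ((i, b xor z(i)), c). Let x^B denote x with all bits in B flipped. Let U_1, …, U_T be arbitrary unitary matrices on this space, let v be a unit vector, and define ψ_0 = φ_0 = v, ψ_{t+1} = U_{t+1}·O_x·ψ_t, and φ_{t+1} = U_{t+1}·O_{x^B}·φ_t for 0 ≤ t < T. For t ∈ {1, …, T} and i ∈ Fin n, let m_i^t = ∑_{b : Bool} ∑_{c : Fin w} |ψ_{t−1}((i,b),c)|² (the probability that measuring the query register after t−1 queries yields index i). Suppose ε ∈ [0, 1/2] and the final states satisfy (1/2)‖ψ_T ψ_Tᴴ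 − φ_T φ_Tᴴ‖₁ ≥ 1 − 2ε, where ψψᴴ is the matrix with entries ψ_u · conj(ψ_v). Then ∑_{t=1}^{T} ∑_{i ∈ B} m_i^t ≥ (1 − 2ε)² / (4T). -/
/-!
Write `Δₜ = ψₜ - φₜ`. Both runs apply the same unitary `U (t + 1)` after different oracles, so
`‖Δₜ₊₁‖ ≤ ‖Δₜ‖ + ‖(O_x - O_{x^B}) ψₜ‖`; as `O_x` and `O_{x^B}` agree off the block, the last term
is at most `2 ‖P_B ψₜ‖`, where `P_B` keeps the coordinates whose query index lies in `B`. For unit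
vectors the trace distance of the pure states is `√(1 - |⟪ψ, φ⟫|²) ≤ ‖ψ - φ‖`, hence
`1 - 2ε ≤ ∑ₜ 2 ‖P_B ψₜ‖`, and Cauchy–Schwarz turns this into
`(1 - 2ε)² ≤ 4T ∑ₜ ‖P_B ψₜ‖² = 4T ∑ₜ ∑_{i ∈ B} mᵢ^{t+1}`.
-/

open scoped ComplexOrder

/-- The square root of a positive semidefinite matrix (the definition `Matrix.PosSemidef.sqrt`
of the older Mathlib, which has since been removed). -/
noncomputable def Matrix.PosSemidef.sqrt {n 𝕜 : Type*} [Fintype n] [RCLike 𝕜] [DecidableEq n]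
    {A : Matrix n n 𝕜} (hA : A.PosSemidef) : Matrix n n 𝕜 :=
  hA.1.eigenvectorUnitary.1 * Matrix.diagonal ((↑) ∘ (√·) ∘ hA.1.eigenvalues) *
    (star hA.1.eigenvectorUnitary : Matrix n n 𝕜)

/-- The trace norm of a complex square matrix `A`: the trace of `√(Aᴴ A)`
(equivalently, the sum of the singular values of `A`). -/
noncomputable def traceNorm {m : Type*} [Fintype m] [DecidableEq m] (A : Matrix m m ℂ) : ℝ :=
  (Matrix.PosSemidef.sqrt (Matrix.posSemidef_conjTranspose_mul_self A)).trace.re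

/-- The query oracle for input `z`: the permutation matrix sending the basis vector indexed by
`((i, b), c)` to the basis vector indexed by `((i, b xor z i), c)`. -/
def queryOracle {n w : ℕ} (z : Fin n → Bool) :
    Matrix ((Fin n × Bool) × Fin w) ((Fin n × Bool) × Fin w) ℂ :=
  Matrix.of fun p q => if p = ((q.1.1, xor q.1.2 (z q.1.1)), q.2) then 1 else 0

open Matrix WithLp
open scoped InnerProductSpace

theorem sqrt_one_sub_norm_inner_sq_le_norm_sub {𝕜 E : Type*} [RCLike 𝕜] [NormedAddCommGroup E]
    [InnerProductSpace 𝕜 E] {x y : E} (hx : ‖x‖ = 1) (hy : ‖y‖ = 1) :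
    √(1 - ‖⟪x, y⟫_𝕜‖ ^ 2) ≤ ‖x - y‖ := by
  refine Real.sqrt_le_iff.mpr ⟨norm_nonneg _, ?_⟩
  rw [norm_sub_sq (𝕜 := 𝕜), hx, hy]
  nlinarith [RCLike.re_le_norm ⟪x, y⟫_𝕜, sq_nonneg (1 - ‖⟪x, y⟫_𝕜‖)]

theorem sq_div_card_le_sum_sq_of_le_sum {ι : Type*} {s : Finset ι} {f : ι → ℝ} {a : ℝ}
    (ha : 0 ≤ a) (h : a ≤ ∑ i ∈ s, f i) : a ^ 2 / s.card ≤ ∑ i ∈ s, f i ^ 2 := by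
  refine div_le_of_le_mul₀ (by positivity) (by positivity) ?_
  rw [mul_comm]
  exact (pow_le_pow_left₀ ha h 2).trans sq_sum_le_card_mul_sum_sq

section TraceNorm

variable {ι : Type*} [Fintype ι] [DecidableEq ι]

open scoped MatrixOrder in
theorem traceNorm_eq_re_trace_of_sq_eq {A S : Matrix ι ι ℂ} (hS : S.PosSemidef)
    (h : S ^ 2 = Aᴴ * A) : traceNorm A = S.trace.re := by
  have hB := posSemidef_conjTranspose_mul_self A
  have hsqrt : hB.sqrt = CFC.sqrt (Aᴴ * A) := by
    rw [CFC.sqrt_eq_cfc, cfc_nnreal_eq_real _ (Aᴴ * A), hB.1.cfc_eq]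
    simp only [IsHermitian.cfc, Unitary.conjStarAlgAut_apply, PosSemidef.sqrt]
    unfold Real.sqrt
    rfl
  rw [traceNorm, hsqrt, CFC.sqrt_unique (by rw [← h, sq]) hS.nonneg]

theorem traceNorm_zero : traceNorm (0 : Matrix ι ι ℂ) = 0 := by
  rw [traceNorm_eq_re_trace_of_sq_eq (S := 0) PosSemidef.zero (by simp), trace_zero,
    Complex.zero_re]

theorem Matrix.IsHermitian.traceNorm_eq_of_cube_eq_smul {A : Matrix ι ι ℂ} (hA : A.IsHermitian)
    {k s : ℝ} (hs : 0 ≤ s) (hcube : A * A * A = s ^ 2 • A)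
    (htrace : (A * A).trace = ((k * s ^ 2 : ℝ) : ℂ)) : traceNorm A = k * s := by
  rcases hs.eq_or_lt with rfl | hs
  · have : A = 0 := by
      rw [← trace_conjTranspose_mul_self_eq_zero_iff, hA.eq, htrace]
      simp
    simp [this, traceNorm_zero]
  · -- `s⁻¹ • A²` is the positive square root of `A²`.
    have hS : (s⁻¹ • (Aᴴ * A)).PosSemidef :=
      (posSemidef_conjTranspose_mul_self A).smul (inv_nonneg.mpr hs.le)
    have hS2 : (s⁻¹ • (Aᴴ * A)) ^ 2 = Aᴴ * A := by
      rw [hA.eq, sq, smul_mul_smul_comm, ← mul_assoc, hcube, smul_mul_assoc, smul_smul,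
        show s⁻¹ * s⁻¹ * s ^ 2 = 1 by field_simp, one_smul]
    rw [traceNorm_eq_re_trace_of_sq_eq hS hS2, trace_smul, hA.eq, htrace]
    simp only [Complex.real_smul, Complex.mul_re, Complex.ofReal_re, Complex.ofReal_im]
    field_simp
    ring

theorem traceNorm_vecMulVec_sub_vecMulVec {x y : EuclideanSpace ℂ ι} (hx : ‖x‖ = 1)
    (hy : ‖y‖ = 1) :
    traceNorm (vecMulVec (ofLp x) (star (ofLp x)) - vecMulVec (ofLp y) (star (ofLp y))) =
      2 * √(1 - ‖⟪x, y⟫_ℂ‖ ^ 2) := by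
  set c := ⟪x, y⟫_ℂ
  set A := vecMulVec (ofLp x) (star (ofLp x)) - vecMulVec (ofLp y) (star (ofLp y))
  have hmul (u v w z : ι → ℂ) : vecMulVec u v * vecMulVec w z = (w ⬝ᵥ v) • vecMulVec u z := by
    rw [vecMulVec_mul_vecMulVec, dotProduct_comm, vecMulVec_smul]
  have hxx : ofLp x ⬝ᵥ star (ofLp x) = 1 := by
    rw [← EuclideanSpace.inner_eq_star_dotProduct, inner_self_eq_norm_sq_to_K, hx]; simp
  have hyy : ofLp y ⬝ᵥ star (ofLp y) = 1 := by
    rw [← EuclideanSpace.inner_eq_star_dotProduct, inner_self_eq_norm_sq_to_K, hy]; simp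
  have hxy : ofLp y ⬝ᵥ star (ofLp x) = c := rfl
  have hyx : ofLp x ⬝ᵥ star (ofLp y) = starRingEnd ℂ c := (inner_conj_symm y x).symm
  have hc : ‖c‖ ≤ 1 := by simpa [hx, hy] using norm_inner_le_norm (𝕜 := ℂ) x y
  have hs : √(1 - ‖c‖ ^ 2) ^ 2 = 1 - ‖c‖ ^ 2 := Real.sq_sqrt (by nlinarith [norm_nonneg c])
  have hnorm : ((‖c‖ ^ 2 : ℝ) : ℂ) = c * starRingEnd ℂ c := by
    rw [Complex.mul_conj, Complex.normSq_eq_norm_sq]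
  have hA : A.IsHermitian := by
    simp [A, IsHermitian, conjTranspose_sub]
  have hcube : A * A * A = √(1 - ‖c‖ ^ 2) ^ 2 • A := by
    rw [hs, ← Complex.coe_smul, Complex.ofReal_sub, hnorm]
    simp only [A, sub_mul, mul_sub, hmul, smul_mul_assoc, hxx, hyy, hxy, hyx,
      smul_smul, smul_sub]
    module
  have htrace : (A * A).trace = ((2 * √(1 - ‖c‖ ^ 2) ^ 2 : ℝ) : ℂ) := by
    rw [hs, Complex.ofReal_mul, Complex.ofReal_sub, hnorm, Complex.ofReal_ofNat,
      Complex.ofReal_one]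
    simp only [A, sub_mul, mul_sub, hmul, trace_sub, trace_smul, trace_vecMulVec, hxx, hyy, hxy,
      hyx, smul_eq_mul]
    ring
  exact hA.traceNorm_eq_of_cube_eq_smul (Real.sqrt_nonneg _) hcube htrace

theorem traceNorm_vecMulVec_sub_vecMulVec_le {x y : EuclideanSpace ℂ ι} (hx : ‖x‖ = 1)
    (hy : ‖y‖ = 1) :
    traceNorm (vecMulVec (ofLp x) (star (ofLp x)) - vecMulVec (ofLp y) (star (ofLp y))) ≤
      2 * ‖x - y‖ := by
  rw [traceNorm_vecMulVec_sub_vecMulVec hx hy]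
  gcongr
  exact sqrt_one_sub_norm_inner_sq_le_norm_sub hx hy

end TraceNorm

section Unitary

variable {ι 𝕜 : Type*} [Fintype ι] [DecidableEq ι] [RCLike 𝕜]

theorem Matrix.isometry_toEuclideanCLM_of_mem_unitaryGroup {M : Matrix ι ι 𝕜}
    (hM : M ∈ unitaryGroup ι 𝕜) : Isometry (toEuclideanCLM (n := ι) (𝕜 := 𝕜) M) :=
  AddMonoidHomClass.isometry_of_norm _
    (ContinuousLinearMap.norm_map_of_mem_unitary (Unitary.map_mem toEuclideanCLM hM))

theorem Matrix.norm_toLp_mulVec_of_mem_unitaryGroup {M : Matrix ι ι 𝕜}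
    (hM : M ∈ unitaryGroup ι 𝕜) (f : ι → 𝕜) : ‖toLp 2 (M *ᵥ f)‖ = ‖toLp 2 f‖ := by
  rw [← toEuclideanCLM_toLp, (isometry_toEuclideanCLM_of_mem_unitaryGroup hM).norm_map_of_map_zero
    (map_zero _)]

end Unitary

theorem dist_le_dist_add_sum_of_isometry {E : Type*} [PseudoMetricSpace E] {T : ℕ}
    {A A' : ℕ → E → E} (hA' : ∀ t < T, Isometry (A' t)) {ψ φ : ℕ → E}
    (hψ : ∀ t < T, ψ (t + 1) = A t (ψ t)) (hφ : ∀ t < T, φ (t + 1) = A' t (φ t)) :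
    dist (ψ T) (φ T) ≤
      dist (ψ 0) (φ 0) + ∑ t ∈ Finset.range T, dist (A t (ψ t)) (A' t (ψ t)) := by
  induction T with
  | zero => simp
  | succ T ih =>
    have ih := ih (fun t ht => hA' t (by omega)) (fun t ht => hψ t (by omega))
      (fun t ht => hφ t (by omega))
    rw [hψ T T.lt_succ_self, hφ T T.lt_succ_self, Finset.sum_range_succ]
    calc dist (A T (ψ T)) (A' T (φ T))
        ≤ dist (A T (ψ T)) (A' T (ψ T)) + dist (A' T (ψ T)) (A' T (φ T)) := dist_triangle _ _ _
      _ = dist (A T (ψ T)) (A' T (ψ T)) + dist (ψ T) (φ T) := by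
        rw [(hA' T T.lt_succ_self).dist_eq]
      _ ≤ _ := by linarith

theorem norm_toLp_eq_of_unitary_evolution {ι : Type*} [Fintype ι] [DecidableEq ι] {T : ℕ}
    {M : ℕ → Matrix ι ι ℂ} (hM : ∀ t < T, M t ∈ unitaryGroup ι ℂ) {ψ : ℕ → ι → ℂ}
    (hψ : ∀ t < T, ψ (t + 1) = M t *ᵥ ψ t) : ‖toLp 2 (ψ T)‖ = ‖toLp 2 (ψ 0)‖ := by
  induction T with
  | zero => rfl
  | succ T ih =>
    rw [hψ T T.lt_succ_self, norm_toLp_mulVec_of_mem_unitaryGroup (hM T T.lt_succ_self)]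
    exact ih (fun t ht => hM t (by omega)) (fun t ht => hψ t (by omega))

section QueryOracle

variable {n w : ℕ}

def queryFlip (z : Fin n → Bool) : Equiv.Perm ((Fin n × Bool) × Fin w) :=
  Function.Involutive.toPerm (fun p => ((p.1.1, xor p.1.2 (z p.1.1)), p.2)) fun p => by simp

@[simp]
theorem queryFlip_apply (z : Fin n → Bool) (p : (Fin n × Bool) × Fin w) :
    queryFlip z p = ((p.1.1, xor p.1.2 (z p.1.1)), p.2) :=
  rfl

theorem queryFlip_involutive (z : Fin n → Bool) : Function.Involutive (queryFlip (w := w) z) :=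
  Function.Involutive.toPerm_involutive _

theorem queryOracle_eq_permMatrix (z : Fin n → Bool) :
    queryOracle (w := w) z = (queryFlip z).permMatrix ℂ := by
  ext p q
  simp only [Equiv.Perm.permMatrix, PEquiv.toMatrix_apply, Equiv.toPEquiv_apply,
    Option.mem_def, Option.some_inj, (queryFlip_involutive z).eq_iff]
  rfl

theorem queryOracle_mulVec (z : Fin n → Bool) (f : (Fin n × Bool) × Fin w → ℂ) :
    queryOracle z *ᵥ f = f ∘ queryFlip z := by
  rw [queryOracle_eq_permMatrix, permMatrix_mulVec]

theorem queryOracle_mem_unitaryGroup (z : Fin n → Bool) :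
    queryOracle (w := w) z ∈ unitaryGroup _ ℂ := by
  rw [queryOracle_eq_permMatrix, mem_unitaryGroup_iff, star_eq_conjTranspose,
    conjTranspose_permMatrix, ← permMatrix_mul, inv_mul_cancel, permMatrix_one]

theorem queryOracle_sub_mulVec_indicator (x : Fin n → Bool) (B : Finset (Fin n))
    (f : (Fin n × Bool) × Fin w → ℂ) :
    (queryOracle x - queryOracle (flipBlock x B)) *ᵥ {p | p.1.1 ∈ B}.indicator f =
      (queryOracle x - queryOracle (flipBlock x B)) *ᵥ f := by
  ext p
  by_cases hp : p.1.1 ∈ B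
  · simp [sub_mulVec, queryOracle_mulVec, hp]
  · simp [sub_mulVec, queryOracle_mulVec, hp, flipBlock]

theorem norm_toLp_queryOracle_sub_mulVec_le (x : Fin n → Bool) (B : Finset (Fin n))
    (f : (Fin n × Bool) × Fin w → ℂ) :
    ‖toLp 2 ((queryOracle x - queryOracle (flipBlock x B)) *ᵥ f)‖ ≤
      2 * ‖toLp 2 ({p | p.1.1 ∈ B}.indicator f)‖ := by
  rw [← queryOracle_sub_mulVec_indicator, sub_mulVec, toLp_sub, two_mul]
  refine (norm_sub_le _ _).trans_eq ?_
  rw [norm_toLp_mulVec_of_mem_unitaryGroup (queryOracle_mem_unitaryGroup _),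
    norm_toLp_mulVec_of_mem_unitaryGroup (queryOracle_mem_unitaryGroup _)]

theorem norm_toLp_indicator_sq (B : Finset (Fin n)) (f : (Fin n × Bool) × Fin w → ℂ) :
    ‖toLp 2 ({p | p.1.1 ∈ B}.indicator f)‖ ^ 2 = ∑ i ∈ B, ∑ b, ∑ c, ‖f ((i, b), c)‖ ^ 2 := by
  rw [EuclideanSpace.norm_sq_eq, Fintype.sum_prod_type, Fintype.sum_prod_type]
  simp [Set.indicator_apply, apply_ite, Finset.sum_ite_mem]

end QueryOracle

section QueryAlgorithm

variable {n w T : ℕ} {U : ℕ → Matrix ((Fin n × Bool) × Fin w) ((Fin n × Bool) × Fin w) ℂ}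

theorem norm_toLp_run_eq (hU : ∀ t < T, U (t + 1) ∈ unitaryGroup _ ℂ) (z : Fin n → Bool)
    {ψ : ℕ → (Fin n × Bool) × Fin w → ℂ}
    (hψ : ∀ t < T, ψ (t + 1) = U (t + 1) *ᵥ (queryOracle z *ᵥ ψ t)) :
    ‖toLp 2 (ψ T)‖ = ‖toLp 2 (ψ 0)‖ :=
  norm_toLp_eq_of_unitary_evolution
    (fun t ht => Submonoid.mul_mem _ (hU t ht) (queryOracle_mem_unitaryGroup z))
    fun t ht => by rw [hψ t ht, mulVec_mulVec]

theorem dist_toLp_runs_le (hU : ∀ t < T, U (t + 1) ∈ unitaryGroup _ ℂ) (x : Fin n → Bool)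
    (B : Finset (Fin n)) {ψ φ : ℕ → (Fin n × Bool) × Fin w → ℂ}
    (hψ : ∀ t < T, ψ (t + 1) = U (t + 1) *ᵥ (queryOracle x *ᵥ ψ t))
    (hφ : ∀ t < T, φ (t + 1) = U (t + 1) *ᵥ (queryOracle (flipBlock x B) *ᵥ φ t)) :
    dist (toLp 2 (ψ T)) (toLp 2 (φ T)) ≤ dist (toLp 2 (ψ 0)) (toLp 2 (φ 0)) +
      ∑ t ∈ Finset.range T, 2 * ‖toLp 2 ({p | p.1.1 ∈ B}.indicator (ψ t))‖ := by
  refine (dist_le_dist_add_sum_of_isometry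
    (A := fun t => toEuclideanCLM (n := (Fin n × Bool) × Fin w) (𝕜 := ℂ)
      (U (t + 1) * queryOracle x))
    (A' := fun t => toEuclideanCLM (n := (Fin n × Bool) × Fin w) (𝕜 := ℂ)
      (U (t + 1) * queryOracle (flipBlock x B)))
    (ψ := fun t => toLp 2 (ψ t)) (φ := fun t => toLp 2 (φ t))
    (fun t ht => isometry_toEuclideanCLM_of_mem_unitaryGroup
      (Submonoid.mul_mem _ (hU t ht) (queryOracle_mem_unitaryGroup _)))
    (fun t ht => by rw [hψ t ht, toEuclideanCLM_toLp, mulVec_mulVec])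
    (fun t ht => by rw [hφ t ht, toEuclideanCLM_toLp, mulVec_mulVec])).trans ?_
  gcongr with t ht
  rw [toEuclideanCLM_toLp, toEuclideanCLM_toLp, dist_eq_norm, ← toLp_sub, ← sub_mulVec,
    ← mul_sub, ← mulVec_mulVec, norm_toLp_mulVec_of_mem_unitaryGroup
      (hU t (Finset.mem_range.mp ht))]
  exact norm_toLp_queryOracle_sub_mulVec_le x B (ψ t)

end QueryAlgorithm

theorem hybrid_argument_general {n w T : ℕ}
    (x : Fin n → Bool) (B : Finset (Fin n))
    (U : ℕ → Matrix ((Fin n × Bool) × Fin w) ((Fin n × Bool) × Fin w) ℂ)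
    (hU : ∀ t, 1 ≤ t → t ≤ T → U t ∈ Matrix.unitaryGroup ((Fin n × Bool) × Fin w) ℂ)
    (v : (Fin n × Bool) × Fin w → ℂ)
    (hv : ∑ u, ‖v u‖ ^ 2 = 1)
    (ψ φ : ℕ → (Fin n × Bool) × Fin w → ℂ)
    (hψ0 : ψ 0 = v) (hφ0 : φ 0 = v)
    (hψ : ∀ t, t < T → ψ (t + 1) = (U (t + 1)).mulVec ((queryOracle x).mulVec (ψ t)))
    (hφ : ∀ t, t < T →
      φ (t + 1) = (U (t + 1)).mulVec ((queryOracle (flipBlock x B)).mulVec (φ t)))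
    (ε : ℝ) (hε1 : ε ≤ 1 / 2)
    (hfar : (1 / 2 : ℝ) * traceNorm
        (Matrix.vecMulVec (ψ T) (star (ψ T)) - Matrix.vecMulVec (φ T) (star (φ T)))
      ≥ 1 - 2 * ε) :
    ∑ t ∈ Finset.Icc 1 T, ∑ i ∈ B,
        (∑ b : Bool, ∑ c : Fin w, ‖ψ (t - 1) ((i, b), c)‖ ^ 2)
      ≥ (1 - 2 * ε) ^ 2 / (4 * T) := by
  have hU' : ∀ t < T, U (t + 1) ∈ unitaryGroup _ ℂ := fun t ht => hU (t + 1) (by omega) ht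
  have hv1 : ‖toLp 2 v‖ = 1 := by rw [EuclideanSpace.norm_eq, hv, Real.sqrt_one]
  have hψT : ‖toLp 2 (ψ T)‖ = 1 := by rw [norm_toLp_run_eq hU' x hψ, hψ0, hv1]
  have hφT : ‖toLp 2 (φ T)‖ = 1 := by rw [norm_toLp_run_eq hU' _ hφ, hφ0, hv1]
  have hapart : 1 - 2 * ε ≤ dist (toLp 2 (ψ T)) (toLp 2 (φ T)) := by
    have := traceNorm_vecMulVec_sub_vecMulVec_le hψT hφT
    rw [dist_eq_norm]
    linarith
  have hhybrid := dist_toLp_runs_le hU' x B hψ hφ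
  rw [hψ0, hφ0, dist_self, zero_add] at hhybrid
  have hcs := sq_div_card_le_sum_sq_of_le_sum (by linarith) (hapart.trans hhybrid)
  simp_rw [mul_pow, norm_toLp_indicator_sq, ← Finset.mul_sum, Finset.card_range] at hcs
  rw [← Finset.Ico_add_one_right_eq_Icc, Finset.sum_Ico_eq_sum_range, ge_iff_le,
    mul_comm (4 : ℝ), ← div_div]
  simp only [add_tsub_cancel_left, add_tsub_cancel_right]
  linarith

/-- The hybrid argument: if a `T`-query quantum algorithm produces final states on inputs `x` and
`x^B` that are at trace distance at least `1 - 2ε`, then the total query weight placed on the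
block `B` over the course of the algorithm is at least `(1 - 2ε)² / (4T)`. -/
theorem hybrid_argument {n w T : ℕ} (hn : 1 ≤ n) (hw : 1 ≤ w) (hT : 1 ≤ T)
    (x : Fin n → Bool) (B : Finset (Fin n))
    (U : ℕ → Matrix ((Fin n × Bool) × Fin w) ((Fin n × Bool) × Fin w) ℂ)
    (hU : ∀ t, 1 ≤ t → t ≤ T → U t ∈ Matrix.unitaryGroup ((Fin n × Bool) × Fin w) ℂ)
    (v : (Fin n × Bool) × Fin w → ℂ)
    (hv : ∑ u, ‖v u‖ ^ 2 = 1)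
    (ψ φ : ℕ → (Fin n × Bool) × Fin w → ℂ)
    (hψ0 : ψ 0 = v) (hφ0 : φ 0 = v)
    (hψ : ∀ t, t < T → ψ (t + 1) = (U (t + 1)).mulVec ((queryOracle x).mulVec (ψ t)))
    (hφ : ∀ t, t < T →
      φ (t + 1) = (U (t + 1)).mulVec ((queryOracle (flipBlock x B)).mulVec (φ t)))
    (ε : ℝ) (hε0 : 0 ≤ ε) (hε1 : ε ≤ 1 / 2)
    (hfar : (1 / 2 : ℝ) * traceNorm
        (Matrix.vecMulVec (ψ T) (star (ψ T)) - Matrix.vecMulVec (φ T) (star (φ T)))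
      ≥ 1 - 2 * ε) :
    ∑ t ∈ Finset.Icc 1 T, ∑ i ∈ B,
        (∑ b : Bool, ∑ c : Fin w, ‖ψ (t - 1) ((i, b), c)‖ ^ 2)
      ≥ (1 - 2 * ε) ^ 2 / (4 * T) :=
  hybrid_argument_general x B U hU v hv ψ φ hψ0 hφ0 hψ hφ ε hε1 hfar
end
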